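/- In the setting of the discrete approximation scheme for the stochastic dynamical system x_{t+1} = f(x_t, ω_t) (with quantization errors θ_{d,t} ≤ ε at every time step t and approximators P̂_{x_{t+1}} := f#Δ_{R_t,C_t}#(P̂_{x_t} × P_ω)), if the dynamics f is Lipschitz continuous in (x, ω) with Lipschitz constant L_f < 1, then the approximation error satisfies lim_{t → ∞} W_ρ(P_{x_t}, P̂_{x_t}) ≤ L_f ε / (1 − L_f); i.e. the error bounds θ_t defined by θ_{t+1} = L_f(θ_t + ε) converge to the fixed point L_f ε / (1 − L_f), which asymptotically bounds W_ρ(P_{x_t}, P̂_{x_t}). -/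

import Mathlib

open MeasureTheory ENNReal

noncomputable section

/-- `ℝ^d` with the Euclidean norm. -/
abbrev Euc (d : ℕ) : Type := EuclideanSpace ℝ (Fin d)

/-- The set of couplings `Γ(μ, ν)` of two measures: probability measures on the product
whose first marginal is `μ` and second marginal is `ν`. -/
def Couplings {β : Type*} [MeasurableSpace β] (μ ν : Measure β) :
    Set (Measure (β × β)) :=
  {γ | IsProbabilityMeasure γ ∧ γ.map Prod.fst = μ ∧ γ.map Prod.snd = ν}

/-- The ρ-Wasserstein distance
`W_ρ(μ, ν) = (inf_{γ ∈ Γ(μ,ν)} ∫ ‖x - y‖^ρ dγ(x,y))^{1/ρ}`. -/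
noncomputable def Wass {β : Type*} [MeasurableSpace β] [NormedAddCommGroup β]
    (ρ : ℝ) (μ ν : Measure β) : ℝ :=
  ((⨅ γ ∈ Couplings μ ν, ∫⁻ p, ENNReal.ofReal (‖p.1 - p.2‖ ^ ρ) ∂γ).toReal) ^ (1/ρ)

/-- `μ` has finite ρ-th moment: `∫ ‖x‖^ρ dμ(x) < ∞`. -/
def HasFiniteMoment {β : Type*} [MeasurableSpace β] [NormedAddCommGroup β]
    (ρ : ℝ) (μ : Measure β) : Prop :=
  ∫⁻ x, ENNReal.ofReal (‖x‖ ^ ρ) ∂μ < ⊤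

/-- A measurable partition of a set `X` into `N` regions. -/
def IsMeasPartition {β : Type*} [MeasurableSpace β] {N : ℕ}
    (R : Fin N → Set β) (X : Set β) : Prop :=
  (∀ i, MeasurableSet (R i)) ∧ (⋃ i, R i) = X ∧ ∀ i j, i ≠ j → R i ∩ R j = ∅

/-- The quantization operator `Δ_{R,C}(x) = Σ_i c_i 1_{R_i}(x)`. -/
noncomputable def quantMap {β : Type*} [AddCommMonoid β] {N : ℕ}
    (R : Fin N → Set β) (c : Fin N → β) (x : β) : β :=
  ∑ i, (R i).indicator (fun _ => c i) x

/-!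
Run the true and the approximate chain from a coupling of their current laws, feed both the same
noise sample, quantize the approximate one and apply `f` to both. Since `f` is `L_f`-Lipschitz,
Minkowski's inequality bounds the `L^ρ` distance of the new coupling by `L_f` times the old
distance plus the quantization error `θ_{d,t} ≤ ε`. Hence `W_{t+1} ≤ L_f (W_t + ε)`, and the
fixed point `L_f ε / (1 - L_f)` of `x ↦ L_f (x + ε)`, which bounds `W_0 = 0`, bounds every `W_t`.
-/

open Filter Topology
open scoped NNReal

section Couplings

variable {X W : Type*} [MeasurableSpace X] [MeasurableSpace W]
  {μ ν : Measure X} {γ : Measure (X × X)}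

theorem map_prodMap_mem_couplings {Y : Type*} [MeasurableSpace Y] (hγ : γ ∈ Couplings μ ν)
    {g h : X → Y} (hg : Measurable g) (hh : Measurable h) :
    γ.map (Prod.map g h) ∈ Couplings (μ.map g) (ν.map h) := by
  obtain ⟨hprob, hfst, hsnd⟩ := hγ
  refine ⟨Measure.isProbabilityMeasure_map (hg.prodMap hh).aemeasurable, ?_, ?_⟩
  · rw [Measure.map_map measurable_fst (hg.prodMap hh), ← hfst,
      Measure.map_map hg measurable_fst]
    rfl
  · rw [Measure.map_map measurable_snd (hg.prodMap hh), ← hsnd,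
      Measure.map_map hh measurable_snd]
    rfl

def commonNoise (w : (X × X) × W) : (X × W) × (X × W) :=
  ((w.1.1, w.2), (w.1.2, w.2))

theorem measurable_commonNoise : Measurable (commonNoise : (X × X) × W → _) := by
  unfold commonNoise
  fun_prop

def withCommonNoise (γ : Measure (X × X)) (Pω : Measure W) : Measure ((X × W) × (X × W)) :=
  (γ.prod Pω).map commonNoise

theorem withCommonNoise_mem_couplings (hγ : γ ∈ Couplings μ ν) (Pω : Measure W)
    [IsProbabilityMeasure Pω] :
    withCommonNoise γ Pω ∈ Couplings (μ.prod Pω) (ν.prod Pω) := by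
  obtain ⟨hprob, hfst, hsnd⟩ := hγ
  have marginal (g : X × X → X) (hg : Measurable g) :
      (γ.prod Pω).map (Prod.map g id) = (γ.map g).prod Pω := by
    rw [← Measure.map_prod_map _ _ hg measurable_id, Measure.map_id]
  refine ⟨Measure.isProbabilityMeasure_map measurable_commonNoise.aemeasurable, ?_, ?_⟩
  · rw [withCommonNoise, Measure.map_map measurable_fst measurable_commonNoise, ← hfst,
      ← marginal _ measurable_fst]
    rfl
  · rw [withCommonNoise, Measure.map_map measurable_snd measurable_commonNoise, ← hsnd,
      ← marginal _ measurable_snd]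
    rfl

end Couplings

section LipschitzStep

variable {X W : Type*} [NormedAddCommGroup X] [MeasurableSpace X] [OpensMeasurableSpace X]
  [SecondCountableTopology X] [NormedAddCommGroup W] [MeasurableSpace W] [OpensMeasurableSpace W]
  [SecondCountableTopology W]

theorem exists_mem_couplings_self_eLpNorm_eq_zero (μ : Measure X) [IsProbabilityMeasure μ]
    (p : ℝ≥0∞) : ∃ γ ∈ Couplings μ μ, eLpNorm (fun z => z.1 - z.2) p γ = 0 := by
  have hdiag : Measurable fun x : X => (x, x) := by fun_prop
  refine ⟨μ.map fun x => (x, x), ⟨Measure.isProbabilityMeasure_map hdiag.aemeasurable, ?_, ?_⟩,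
    ?_⟩
  · rw [Measure.map_map measurable_fst hdiag]
    exact Measure.map_id
  · rw [Measure.map_map measurable_snd hdiag]
    exact Measure.map_id
  · rw [eLpNorm_map_measure (by fun_prop) hdiag.aemeasurable]
    simp [Function.comp_def]

theorem eLpNorm_sub_withCommonNoise {μ ν : Measure X} {γ : Measure (X × X)}
    (hγ : γ ∈ Couplings μ ν) (Pω : Measure W) [IsProbabilityMeasure Pω] (p : ℝ≥0∞) :
    eLpNorm (fun z => z.1 - z.2) p (withCommonNoise γ Pω) =
      eLpNorm (fun z => z.1 - z.2) p γ := by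
  have := hγ.1
  calc _ = eLpNorm ((fun z : X × X => z.1 - z.2) ∘ Prod.fst) p (γ.prod Pω) := by
        rw [withCommonNoise,
          eLpNorm_map_measure (by fun_prop) measurable_commonNoise.aemeasurable]
        exact eLpNorm_congr_norm_ae (ae_of_all _ fun w => by simp [commonNoise, Prod.norm_def])
    _ = _ := by
        rw [← eLpNorm_map_measure (by fun_prop) measurable_fst.aemeasurable]
        simp

theorem exists_coupling_map_quantized_le {p : ℝ≥0∞} (hp : 1 ≤ p) {f : X × W → X}
    (hf : Measurable f) {Lf : ℝ≥0} (hLip : LipschitzWith Lf f) {Δ : X × W → X × W}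
    (hΔ : Measurable Δ) (Pω : Measure W) [IsProbabilityMeasure Pω] {μ ν : Measure X}
    {γ : Measure (X × X)} (hγ : γ ∈ Couplings μ ν) :
    ∃ γ' ∈ Couplings ((μ.prod Pω).map f) (((ν.prod Pω).map Δ).map f),
      eLpNorm (fun z => z.1 - z.2) p γ' ≤
        Lf * (eLpNorm (fun z => z.1 - z.2) p γ + eLpNorm (fun z => z - Δ z) p (ν.prod Pω)) := by
  set γ₂ := withCommonNoise γ Pω
  have hγ₂ := withCommonNoise_mem_couplings hγ Pω
  refine ⟨γ₂.map (Prod.map f (f ∘ Δ)), ?_, ?_⟩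
  · rw [Measure.map_map hf hΔ]
    exact map_prodMap_mem_couplings hγ₂ hf (hf.comp hΔ)
  have hnoise : eLpNorm (fun z => z.2 - Δ z.2) p γ₂ =
      eLpNorm (fun z => z - Δ z) p (ν.prod Pω) := by
    rw [← hγ₂.2.2, eLpNorm_map_measure (by fun_prop) measurable_snd.aemeasurable]
    rfl
  have htriangle := eLpNorm_add_le (f := fun z => z.1 - z.2) (g := fun z => z.2 - Δ z.2)
    (μ := γ₂) (by fun_prop) (by fun_prop) hp
  simp only [Pi.add_def, sub_add_sub_cancel] at htriangle
  calc eLpNorm (fun z => z.1 - z.2) p (γ₂.map (Prod.map f (f ∘ Δ)))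
      = eLpNorm (fun z => f z.1 - f (Δ z.2)) p γ₂ :=
        eLpNorm_map_measure (by fun_prop) (by fun_prop)
    _ ≤ Lf • eLpNorm (fun z => z.1 - Δ z.2) p γ₂ :=
        eLpNorm_le_nnreal_smul_eLpNorm_of_ae_le_mul (ae_of_all _ fun z => by
          simpa only [nndist_eq_nnnorm] using hLip.nndist_le z.1 (Δ z.2)) p
    _ ≤ Lf * (eLpNorm (fun z => z.1 - z.2) p γ + eLpNorm (fun z => z - Δ z) p (ν.prod Pω)) := by
        rw [ENNReal.smul_def, smul_eq_mul, ← eLpNorm_sub_withCommonNoise hγ Pω, ← hnoise]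
        gcongr

theorem exists_coupling_le_of_quantized_scheme {p : ℝ≥0∞} (hp : 1 ≤ p) {f : X × W → X}
    (hf : Measurable f) {Lf : ℝ≥0} (hLip : LipschitzWith Lf f) (Pω : Measure W)
    [IsProbabilityMeasure Pω] {Δ : ℕ → X × W → X × W} (hΔ : ∀ t, Measurable (Δ t))
    {μ ν : ℕ → Measure X} [IsProbabilityMeasure (μ 0)] (h0 : μ 0 = ν 0)
    (hμ : ∀ t, μ (t + 1) = ((μ t).prod Pω).map f)
    (hν : ∀ t, ν (t + 1) = (((ν t).prod Pω).map (Δ t)).map f) {ε B : ℝ≥0∞}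
    (hquant : ∀ t, eLpNorm (fun z => z - Δ t z) p ((ν t).prod Pω) ≤ ε)
    (hB : Lf * (B + ε) ≤ B) (t : ℕ) :
    ∃ γ ∈ Couplings (μ t) (ν t), eLpNorm (fun z => z.1 - z.2) p γ ≤ B := by
  induction t with
  | zero =>
    obtain ⟨γ, hγ, hγ0⟩ := exists_mem_couplings_self_eLpNorm_eq_zero (μ 0) p
    exact ⟨γ, h0 ▸ hγ, by simp [hγ0]⟩
  | succ n ih =>
    obtain ⟨γ, hγ, hle⟩ := ih
    obtain ⟨γ', hγ', hle'⟩ := exists_coupling_map_quantized_le hp hf hLip (hΔ n) Pω hγ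
    refine ⟨γ', hμ n ▸ hν n ▸ hγ', hle'.trans (le_trans ?_ hB)⟩
    gcongr
    exact hquant n

end LipschitzStep

theorem lintegral_ofReal_norm_rpow_eq_eLpNorm_rpow {α E : Type*} [MeasurableSpace α]
    [NormedAddCommGroup E] {μ : Measure α} {ρ : ℝ} (hρ : 0 < ρ) (g : α → E) :
    ∫⁻ x, ENNReal.ofReal (‖g x‖ ^ ρ) ∂μ = eLpNorm g (ENNReal.ofReal ρ) μ ^ ρ := by
  simp_rw [← ENNReal.ofReal_rpow_of_nonneg (norm_nonneg _) hρ.le, ofReal_norm]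
  rw [eLpNorm_eq_eLpNorm' (by simpa using hρ) ENNReal.ofReal_ne_top,
    ENNReal.toReal_ofReal hρ.le, lintegral_rpow_enorm_eq_rpow_eLpNorm' hρ]

theorem Wass_le_of_mem_couplings {E : Type*} [NormedAddCommGroup E] [MeasurableSpace E]
    {ρ B : ℝ} (hρ : 0 < ρ) (hB : 0 ≤ B) {μ ν : Measure E} {γ : Measure (E × E)}
    (hγ : γ ∈ Couplings μ ν)
    (hle : eLpNorm (fun z => z.1 - z.2) (ENNReal.ofReal ρ) γ ≤ ENNReal.ofReal B) :
    Wass ρ μ ν ≤ B := by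
  have hcost : (⨅ γ ∈ Couplings μ ν, ∫⁻ z, ENNReal.ofReal (‖z.1 - z.2‖ ^ ρ) ∂γ) ≤
      ENNReal.ofReal (B ^ ρ) := by
    refine (iInf₂_le γ hγ).trans ?_
    rw [lintegral_ofReal_norm_rpow_eq_eLpNorm_rpow hρ, ← ENNReal.ofReal_rpow_of_nonneg hB hρ.le]
    gcongr
  calc Wass ρ μ ν ≤ (B ^ ρ) ^ (1 / ρ) :=
        Real.rpow_le_rpow toReal_nonneg (toReal_le_of_le_ofReal (by positivity) hcost)
          (by positivity)
    _ = B := by rw [one_div, Real.rpow_rpow_inv hB hρ.ne']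

theorem memLp_id_of_hasFiniteMoment {E : Type*} [NormedAddCommGroup E] [MeasurableSpace E]
    [OpensMeasurableSpace E] [SecondCountableTopology E] {μ : Measure E} {ρ : ℝ} (hρ : 0 < ρ)
    (hmom : HasFiniteMoment ρ μ) : MemLp id (ENNReal.ofReal ρ) μ := by
  refine ⟨aestronglyMeasurable_id, ?_⟩
  rw [← ENNReal.rpow_lt_top_iff_of_pos hρ, ← lintegral_ofReal_norm_rpow_eq_eLpNorm_rpow hρ]
  exact hmom

section Quantization

variable {β : Type*} [AddCommMonoid β] {N : ℕ} {R : Fin N → Set β} (c : Fin N → β)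

theorem quantMap_eq_of_mem (hdisj : ∀ i j, i ≠ j → R i ∩ R j = ∅) {k : Fin N} {z : β}
    (hz : z ∈ R k) : quantMap R c z = c k := by
  rw [quantMap, Finset.sum_eq_single k (fun i _ hik => Set.indicator_of_notMem
    (fun hzi => Set.eq_empty_iff_forall_notMem.mp (hdisj i k hik) z ⟨hzi, hz⟩) _) (by simp)]
  exact Set.indicator_of_mem hz _

theorem measurable_quantMap [MeasurableSpace β] [MeasurableAdd₂ β]
    (hR : ∀ i, MeasurableSet (R i)) : Measurable (quantMap R c) :=
  Finset.measurable_sum _ fun i _ => measurable_const.indicator (hR i)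

theorem lintegral_comp_quantMap [MeasurableSpace β] (hR : IsMeasPartition R Set.univ)
    (μ : Measure β) (φ : β → β → ℝ≥0∞) :
    ∫⁻ z, φ z (quantMap R c z) ∂μ = ∑ k, ∫⁻ z in R k, φ z (c k) ∂μ := by
  obtain ⟨hmeas, hcover, hdisj⟩ := hR
  rw [← setLIntegral_univ, ← hcover,
    lintegral_iUnion hmeas (fun i j hij => Set.disjoint_iff_inter_eq_empty.mpr (hdisj i j hij)),
    tsum_fintype]
  exact Finset.sum_congr rfl fun k _ =>
    setLIntegral_congr_fun (hmeas k) fun z hz => by rw [quantMap_eq_of_mem c hdisj hz]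

end Quantization

theorem eLpNorm_sub_quantMap_le {E : Type*} [NormedAddCommGroup E] [MeasurableSpace E]
    [OpensMeasurableSpace E] [SecondCountableTopology E] {N : ℕ} {R : Fin N → Set E} (c : Fin N → E)
    (hR : IsMeasPartition R Set.univ) {μ : Measure E} [IsFiniteMeasure μ] {ρ ε : ℝ}
    (hρ : 0 < ρ) (hmom : HasFiniteMoment ρ μ)
    (hθ : (∑ k, ∫ z in R k, ‖z - c k‖ ^ ρ ∂μ) ^ (1 / ρ) ≤ ε) :
    eLpNorm (fun z => z - quantMap R c z) (ENNReal.ofReal ρ) μ ≤ ENNReal.ofReal ε := by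
  have hpiece (k : Fin N) : ∫⁻ z in R k, ENNReal.ofReal (‖z - c k‖ ^ ρ) ∂μ =
      ENNReal.ofReal (∫ z in R k, ‖z - c k‖ ^ ρ ∂μ) := by
    have hint := ((memLp_id_of_hasFiniteMoment hρ hmom).sub (memLp_const (c k)))
      |>.integrable_norm_rpow (by simpa using hρ) ENNReal.ofReal_ne_top
    rw [ENNReal.toReal_ofReal hρ.le] at hint
    exact (ofReal_integral_eq_lintegral_ofReal hint.integrableOn
      (ae_of_all _ fun z => by positivity)).symm
  have hsum : 0 ≤ ∑ k, ∫ z in R k, ‖z - c k‖ ^ ρ ∂μ :=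
    Finset.sum_nonneg fun k _ => integral_nonneg fun z => by positivity
  have hε : 0 ≤ ε := (by positivity : (0 : ℝ) ≤ _).trans hθ
  rw [one_div, Real.rpow_inv_le_iff_of_pos hsum hε hρ] at hθ
  rw [← ENNReal.rpow_le_rpow_iff hρ, ← lintegral_ofReal_norm_rpow_eq_eLpNorm_rpow hρ,
    lintegral_comp_quantMap c hR μ (fun z y => ENNReal.ofReal (‖z - y‖ ^ ρ)),
    Finset.sum_congr rfl fun k _ => hpiece k,
    ← ENNReal.ofReal_sum_of_nonneg fun k _ => integral_nonneg fun z => by positivity,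
    ENNReal.ofReal_rpow_of_nonneg hε hρ.le]
  exact ENNReal.ofReal_le_ofReal hθ

theorem tendsto_of_affine_recurrence {a b : ℝ} (ha : |a| < 1) {θ : ℕ → ℝ}
    (hθ : ∀ t, θ (t + 1) = a * θ t + b) : Tendsto θ atTop (𝓝 (b / (1 - a))) := by
  have h1a : 1 - a ≠ 0 := by linarith [le_abs_self a]
  set L := b / (1 - a)
  have hL : a * L + b = L := by simp only [L]; field_simp; ring
  have hclosed (t : ℕ) : θ t = L + a ^ t * (θ 0 - L) := by
    induction t with
    | zero => simp
    | succ n ih => rw [hθ, ih, pow_succ]; linear_combination hL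
  have hlim := ((tendsto_pow_atTop_nhds_zero_of_abs_lt_one ha).mul_const (θ 0 - L)).const_add L
  rw [zero_mul, add_zero] at hlim
  exact hlim.congr fun t => (hclosed t).symm

theorem stmt10_general {d q : ℕ} (ρ : ℝ) (hρ : 1 ≤ ρ) (ε : ℝ) (hε : 0 < ε)
    -- the dynamics: Lipschitz in `(x, ω)` with constant `L_f < 1`
    (f : Euc d × Euc q → Euc d) (hf : Measurable f)
    (Lf : NNReal) (hLip : LipschitzWith Lf f) (hLf : (Lf : ℝ) < 1)
    -- initial and noise distributions
    (Px0 : Measure (Euc d)) (hPx0 : IsProbabilityMeasure Px0)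
    (Pω : Measure (Euc q)) (hPω : IsProbabilityMeasure Pω)
    -- the true state distributions: `P_{x_{t+1}} = f#(P_{x_t} × P_ω)`
    (Px : ℕ → Measure (Euc d))
    (hPx0' : Px 0 = Px0)
    (hPxsucc : ∀ t, Px (t + 1) = ((Px t).prod Pω).map f)
    -- partitions and locations on the joint state-noise space
    (N : ℕ → ℕ)
    (R : (t : ℕ) → Fin (N t) → Set (Euc d × Euc q))
    (c : (t : ℕ) → Fin (N t) → Euc d × Euc q)
    (hR : ∀ t, IsMeasPartition (R t) Set.univ)
    -- the approximating state distributions: `P̂_{x_0} = P_{x_0}`,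
    -- `P̂_{x_{t+1}} = f#Δ_{R_t,C_t}#(P̂_{x_t} × P_ω)`
    (Phat : ℕ → Measure (Euc d))
    (hPhat0 : Phat 0 = Px0)
    (hPhatsucc : ∀ t,
      Phat (t + 1) = (((Phat t).prod Pω).map (quantMap (R t) (c t))).map f)
    -- all measures involved have finite ρ-th moments
    (hmomJoint : ∀ t, HasFiniteMoment ρ ((Phat t).prod Pω))
    -- the quantization errors satisfy `θ_{d,t} ≤ ε`
    (hθd : ∀ t,
      (∑ k, ∫ z in R t k, ‖z - c t k‖ ^ ρ ∂((Phat t).prod Pω)) ^ (1/ρ) ≤ ε) :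
    -- the error bounds `θ_{t+1} = L_f (θ_t + ε)` converge to `L_f ε / (1 − L_f)` ...
    (∀ θ : ℕ → ℝ, (∀ t, θ (t + 1) = (Lf : ℝ) * (θ t + ε)) →
      Filter.Tendsto θ Filter.atTop (nhds ((Lf : ℝ) * ε / (1 - (Lf : ℝ))))) ∧
    -- ... and the fixed point asymptotically bounds the approximation error:
    -- `lim_{t→∞} W_ρ(P_{x_t}, P̂_{x_t}) ≤ L_f ε / (1 − L_f)`
    (∀ δ : ℝ, 0 < δ → ∃ T : ℕ, ∀ t ≥ T,
      Wass ρ (Px t) (Phat t) ≤ (Lf : ℝ) * ε / (1 - (Lf : ℝ)) + δ) := by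
  refine ⟨fun θ hθ => tendsto_of_affine_recurrence (by rwa [abs_of_nonneg Lf.coe_nonneg])
    fun t => by rw [hθ t]; ring, fun δ hδ => ⟨0, fun t _ => ?_⟩⟩
  set L := (Lf : ℝ) * ε / (1 - Lf)
  have h1Lf : 0 < 1 - (Lf : ℝ) := by linarith
  have hL : 0 ≤ L := by positivity
  have hfix : ENNReal.ofReal L = Lf * (ENNReal.ofReal L + ENNReal.ofReal ε) := by
    rw [← ENNReal.ofReal_add hL hε.le, ← ENNReal.ofReal_coe_nnreal,
      ← ENNReal.ofReal_mul Lf.coe_nonneg, show (Lf : ℝ) * (L + ε) = L by simp only [L]; field_simp; ring]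
  have hρ0 : 0 < ρ := by linarith
  have hΔ (t : ℕ) : Measurable (quantMap (R t) (c t)) := measurable_quantMap (c t) (hR t).1
  have hPhat (t : ℕ) : IsProbabilityMeasure (Phat t) := by
    induction t with
    | zero => rwa [hPhat0]
    | succ n ih =>
      rw [hPhatsucc, Measure.map_map hf (hΔ n)]
      exact Measure.isProbabilityMeasure_map (hf.comp (hΔ n)).aemeasurable
  have : IsProbabilityMeasure (Px 0) := hPx0' ▸ hPx0
  obtain ⟨γ, hγ, hle⟩ := exists_coupling_le_of_quantized_scheme (ENNReal.one_le_ofReal.mpr hρ)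
    hf hLip Pω hΔ (hPx0'.trans hPhat0.symm) hPxsucc hPhatsucc
    (fun t => eLpNorm_sub_quantMap_le (c t) (hR t) hρ0 (hmomJoint t) (hθd t)) hfix.ge t
  exact (Wass_le_of_mem_couplings hρ0 hL hγ hle).trans (le_add_of_nonneg_right hδ.le)

/-- Theorem: approximation error dynamics, part ii. In the discrete
approximation scheme for `x_{t+1} = f(x_t, ω_t)` with per-step quantization errors
`θ_{d,t} ≤ ε`, if `f` is Lipschitz in `(x, ω)` with constant `L_f < 1`, then the error
bounds `θ_t` defined by `θ_{t+1} = L_f (θ_t + ε)` converge to the fixed point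
`L_f ε / (1 − L_f)`, and `lim_{t→∞} W_ρ(P_{x_t}, P̂_{x_t}) ≤ L_f ε / (1 − L_f)`. -/
theorem stmt10 {d q : ℕ} (ρ : ℝ) (hρ : 1 ≤ ρ) (ε : ℝ) (hε : 0 < ε)
    -- the dynamics: Lipschitz in `(x, ω)` with constant `L_f < 1`
    (f : Euc d × Euc q → Euc d) (hf : Measurable f)
    (Lf : NNReal) (hLip : LipschitzWith Lf f) (hLf : (Lf : ℝ) < 1)
    -- initial and noise distributions
    (Px0 : Measure (Euc d)) (hPx0 : IsProbabilityMeasure Px0)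
    (Pω : Measure (Euc q)) (hPω : IsProbabilityMeasure Pω)
    -- the true state distributions: `P_{x_{t+1}} = f#(P_{x_t} × P_ω)`
    (Px : ℕ → Measure (Euc d))
    (hPx0' : Px 0 = Px0)
    (hPxsucc : ∀ t, Px (t + 1) = ((Px t).prod Pω).map f)
    -- partitions and locations on the joint state-noise space
    (N : ℕ → ℕ)
    (R : (t : ℕ) → Fin (N t) → Set (Euc d × Euc q))
    (c : (t : ℕ) → Fin (N t) → Euc d × Euc q)
    (hR : ∀ t, IsMeasPartition (R t) Set.univ)
    -- the approximating state distributions: `P̂_{x_0} = P_{x_0}`,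
    -- `P̂_{x_{t+1}} = f#Δ_{R_t,C_t}#(P̂_{x_t} × P_ω)`
    (Phat : ℕ → Measure (Euc d))
    (hPhat0 : Phat 0 = Px0)
    (hPhatsucc : ∀ t,
      Phat (t + 1) = (((Phat t).prod Pω).map (quantMap (R t) (c t))).map f)
    -- all measures involved have finite ρ-th moments
    (hmomPx : ∀ t, HasFiniteMoment ρ (Px t))
    (hmomPhat : ∀ t, HasFiniteMoment ρ (Phat t))
    (hmomJoint : ∀ t, HasFiniteMoment ρ ((Phat t).prod Pω))
    (hmomω : HasFiniteMoment ρ Pω)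
    -- the quantization errors satisfy `θ_{d,t} ≤ ε`
    (hθd : ∀ t,
      (∑ k, ∫ z in R t k, ‖z - c t k‖ ^ ρ ∂((Phat t).prod Pω)) ^ (1/ρ) ≤ ε) :
    -- the error bounds `θ_{t+1} = L_f (θ_t + ε)` converge to `L_f ε / (1 − L_f)` ...
    (∀ θ : ℕ → ℝ, (∀ t, θ (t + 1) = (Lf : ℝ) * (θ t + ε)) →
      Filter.Tendsto θ Filter.atTop (nhds ((Lf : ℝ) * ε / (1 - (Lf : ℝ))))) ∧
    -- ... and the fixed point asymptotically bounds the approximation error: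
    -- `lim_{t→∞} W_ρ(P_{x_t}, P̂_{x_t}) ≤ L_f ε / (1 − L_f)`
    (∀ δ : ℝ, 0 < δ → ∃ T : ℕ, ∀ t ≥ T,
      Wass ρ (Px t) (Phat t) ≤ (Lf : ℝ) * ε / (1 - (Lf : ℝ)) + δ) :=
  stmt10_general ρ hρ ε hε f hf Lf hLip hLf Px0 hPx0 Pω hPω Px hPx0' hPxsucc N R c hR Phat hPhat0
    hPhatsucc hmomJoint hθd
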